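/- arXiv:1406.2738 — 10 statements merged into one kernel-verified Lean document; each statement's English description precedes it below -/
import Mathlib

section
/- Let N ∈ ℕ, let c ≥ 0 be real, let H be an N × N complex matrix, and let Q be an N × N Hermitian positive semidefinite complex matrix whose trace (a nonnegative real number) satisfies trace(Q) ≤ c. Then det(I + H Q Hᴴ) is a real number and det(I + H Q Hᴴ) ≤ ∏_{i=1}^{N} (1 + c · (H Hᴴ)_{ii}), where each diagonal entry (H Hᴴ)_{ii} is real and nonnegative. -/
open Matrix
open scoped ComplexOrder

/-!
Hadamard's inequality `det M ≤ ∏ i, M i i` for positive definite `M`, applied to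
`M = 1 + H Q Hᴴ`, reduces the claim to the diagonal bound `(H Q Hᴴ)ᵢᵢ ≤ tr Q · (H Hᴴ)ᵢᵢ`, which
holds because `tr Q • 1 - Q` is positive semidefinite (every eigenvalue of `Q` is at most the
sum of all of them). Hadamard's inequality itself follows by rescaling `M` to unit diagonal: the
eigenvalues `μ` of the rescaled matrix are nonnegative with `∑ μ = n`, so
`∏ μ ≤ exp (∑ (μ - 1)) = 1`.
-/

theorem Real.prod_le_exp_sum_sub_one {ι : Type*} (s : Finset ι) {z : ι → ℝ}
    (hz : ∀ i ∈ s, 0 ≤ z i) : ∏ i ∈ s, z i ≤ Real.exp (∑ i ∈ s, (z i - 1)) := by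
  rw [Real.exp_sum]
  exact Finset.prod_le_prod hz fun i _ => by linarith [Real.add_one_le_exp (z i - 1)]

namespace Matrix

variable {m n 𝕜 : Type*} [Fintype n] [DecidableEq n] [RCLike 𝕜]

theorem PosSemidef.det_le_one_of_diag_eq_one {B : Matrix n n 𝕜} (hB : B.PosSemidef)
    (hdiag : ∀ i, B i i = 1) : B.det ≤ 1 := by
  have hsum : ∑ i, hB.1.eigenvalues i = Fintype.card n := by
    have h := hB.1.trace_eq_sum_eigenvalues
    simp only [trace, diag, hdiag, Finset.sum_const, Finset.card_univ, nsmul_eq_mul, mul_one] at h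
    exact_mod_cast h.symm
  have hprod : ∏ i, hB.1.eigenvalues i ≤ 1 := by
    calc ∏ i, hB.1.eigenvalues i
        ≤ Real.exp (∑ i, (hB.1.eigenvalues i - 1)) :=
          Real.prod_le_exp_sum_sub_one _ fun i _ => hB.eigenvalues_nonneg i
      _ = 1 := by simp [Finset.sum_sub_distrib, hsum]
  rw [hB.1.det_eq_prod_eigenvalues, ← RCLike.ofReal_prod]
  exact_mod_cast hprod

theorem PosSemidef.trace_smul_one_sub {Q : Matrix n n 𝕜} (hQ : Q.PosSemidef) :
    (Q.trace • 1 - Q).PosSemidef := by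
  set U : Matrix n n 𝕜 := (hQ.1.eigenvectorUnitary : Matrix n n 𝕜)
  set μ := hQ.1.eigenvalues
  have hQ_eq : Q = U * diagonal (RCLike.ofReal ∘ μ) * Uᴴ := hQ.1.spectral_theorem
  have htr : Q.trace = ((∑ i, μ i : ℝ) : 𝕜) := by
    rw [hQ.1.trace_eq_sum_eigenvalues, RCLike.ofReal_sum]
  have hU : U * Uᴴ = 1 := Unitary.mul_star_self_of_mem hQ.1.eigenvectorUnitary.2
  have h : Q.trace • 1 - Q = U * diagonal (fun i => ((∑ j, μ j - μ i : ℝ) : 𝕜)) * Uᴴ := by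
    have hdiag : diagonal (fun i => ((∑ j, μ j - μ i : ℝ) : 𝕜))
        = ((∑ j, μ j : ℝ) : 𝕜) • 1 - diagonal (RCLike.ofReal ∘ μ) := by
      ext i j
      rcases eq_or_ne i j with rfl | hij <;> simp [*]
    rw [hdiag, mul_sub, sub_mul, mul_smul_comm, mul_one, smul_mul_assoc, hU, ← hQ_eq, htr]
  rw [h]
  refine (PosSemidef.diagonal fun i => ?_).mul_mul_conjTranspose_same U
  exact RCLike.ofReal_nonneg.mpr (sub_nonneg.mpr
    (Finset.single_le_sum (fun j _ => hQ.eigenvalues_nonneg j) (Finset.mem_univ i)))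

theorem PosSemidef.diag_mul_mul_conjTranspose_le [Fintype m] {Q : Matrix n n 𝕜}
    (hQ : Q.PosSemidef) (H : Matrix m n 𝕜) (i : m) :
    (H * Q * Hᴴ) i i ≤ Q.trace * (H * Hᴴ) i i := by
  have h := (hQ.trace_smul_one_sub.mul_mul_conjTranspose_same H).diag_nonneg (i := i)
  rwa [Matrix.mul_sub, Matrix.sub_mul, Matrix.mul_smul, Matrix.mul_one, Matrix.smul_mul,
    sub_apply, smul_apply, smul_eq_mul, sub_nonneg] at h

theorem PosDef.det_le_prod_diag {M : Matrix n n 𝕜} (hM : M.PosDef) : M.det ≤ ∏ i, M i i := by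
  obtain ⟨s, hs_pos, hs_sq⟩ : ∃ s : n → ℝ, (∀ i, 0 < s i) ∧ ∀ i, (s i : 𝕜) * s i = M i i := by
    have hd_pos i : 0 < RCLike.re (M i i) := (RCLike.pos_iff.mp hM.diag_pos).1
    refine ⟨fun i => √(RCLike.re (M i i)), fun i => Real.sqrt_pos.mpr (hd_pos i), fun i => ?_⟩
    rw [← RCLike.ofReal_mul, Real.mul_self_sqrt (hd_pos i).le, hM.isHermitian.coe_re_apply_self]
  set D : Matrix n n 𝕜 := diagonal fun i => ((s i)⁻¹ : ℝ)
  have hD : Dᴴ = D := by simp [D, diagonal_conjTranspose]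
  have hB := hM.posSemidef.conjTranspose_mul_mul_same D
  have hB_diag : ∀ i, (Dᴴ * M * D) i i = 1 := by
    intro i
    have hsi : (s i : 𝕜) ≠ 0 := by exact_mod_cast (hs_pos i).ne'
    rw [hD]
    simp only [D, mul_diagonal, diagonal_mul, ← hs_sq i, RCLike.ofReal_inv]
    field_simp
  have hdet : M.det = (Dᴴ * M * D).det * ∏ i, M i i := by
    have hP : ∏ i, (s i : 𝕜) ≠ 0 := Finset.prod_ne_zero_iff.mpr fun i _ => by
      exact_mod_cast (hs_pos i).ne'
    rw [hD]
    simp only [det_mul, D, det_diagonal, ← hs_sq, Finset.prod_mul_distrib, RCLike.ofReal_inv,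
      Finset.prod_inv_distrib]
    field_simp
  rw [hdet]
  exact mul_le_of_le_one_left (Finset.prod_nonneg fun i _ => hM.posSemidef.diag_nonneg)
    (hB.det_le_one_of_diag_eq_one hB_diag)

end Matrix

theorem det_one_add_conj_le_prod_diag_general (N : ℕ) (c : ℝ)
    (H Q : Matrix (Fin N) (Fin N) ℂ) (hQ : Q.PosSemidef)
    (htr : (Matrix.trace Q).re ≤ c) :
    ((1 + H * Q * Hᴴ).det).im = 0 ∧
    (∀ i : Fin N, ((H * Hᴴ) i i).im = 0 ∧ 0 ≤ ((H * Hᴴ) i i).re) ∧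
    ((1 + H * Q * Hᴴ).det).re ≤ ∏ i : Fin N, (1 + c * ((H * Hᴴ) i i).re) := by
  have hM : (1 + H * Q * Hᴴ).PosDef :=
    PosDef.one.add_posSemidef (hQ.mul_mul_conjTranspose_same H)
  have hHH i : 0 ≤ (H * Hᴴ) i i := (posSemidef_self_mul_conjTranspose H).diag_nonneg
  have htr' : Q.trace ≤ c :=
    Complex.le_def.mpr ⟨htr, (Complex.nonneg_iff.mp hQ.trace_nonneg).2.symm⟩
  have hdet : (1 + H * Q * Hᴴ).det ≤ ∏ i, (1 + c * (H * Hᴴ) i i) :=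
    calc (1 + H * Q * Hᴴ).det ≤ ∏ i, (1 + H * Q * Hᴴ) i i := hM.det_le_prod_diag
      _ ≤ ∏ i, (1 + c * (H * Hᴴ) i i) := by
        refine Finset.prod_le_prod (fun i _ => ?_) fun i _ => ?_
        · exact hM.posSemidef.diag_nonneg
        · simpa using (hQ.diag_mul_mul_conjTranspose_le H i).trans
            (mul_le_mul_of_nonneg_right htr' (hHH i))
  refine ⟨(Complex.nonneg_iff.mp hM.det_pos.le).2.symm,
    fun i => ⟨(Complex.nonneg_iff.mp (hHH i)).2.symm, (Complex.nonneg_iff.mp (hHH i)).1⟩, ?_⟩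
  have hprod : ∏ i, (1 + c * (H * Hᴴ) i i) = ((∏ i, (1 + c * ((H * Hᴴ) i i).re) : ℝ) : ℂ) := by
    push_cast
    exact Finset.prod_congr rfl fun i _ => by
      rw [← Complex.eq_re_of_ofReal_le (Complex.ofReal_zero ▸ hHH i)]
  simpa only [hprod, Complex.ofReal_re] using (Complex.le_def.mp hdet).1

/-- Hadamard-type bound: for a complex `N × N` matrix `H` and a Hermitian positive
semidefinite `Q` with `trace Q ≤ c`, `det (I + H Q Hᴴ)` is real and bounded by
`∏ i (1 + c * (H Hᴴ)_{ii})`, where the diagonal entries of `H Hᴴ` are real and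
nonnegative. -/
theorem det_one_add_conj_le_prod_diag (N : ℕ) (c : ℝ) (hc : 0 ≤ c)
    (H Q : Matrix (Fin N) (Fin N) ℂ) (hQ : Q.PosSemidef)
    (htr : (Matrix.trace Q).re ≤ c) :
    ((1 + H * Q * Hᴴ).det).im = 0 ∧
    (∀ i : Fin N, ((H * Hᴴ) i i).im = 0 ∧ 0 ≤ ((H * Hᴴ) i i).re) ∧
    ((1 + H * Q * Hᴴ).det).re ≤ ∏ i : Fin N, (1 + c * ((H * Hᴴ) i i).re) :=
  det_one_add_conj_le_prod_diag_general N c H Q hQ htr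
end

section
/- Let N ∈ ℕ and let M be an N × N Hermitian positive semidefinite complex matrix. Then det(I + M) is a real number, each diagonal entry M_{ii} is real and nonnegative, and det(I + M) ≤ ∏_{i=1}^{N} (1 + M_{ii}). -/
/-!
After rescaling `A` by the positive diagonal matrix `D = diag (A i i)^(-1/2)`, the positive
semidefinite matrix `D A D` has unit diagonal, so its eigenvalues are nonnegative and sum to the
dimension; by AM-GM (in the form `x ≤ exp (x - 1)`) their product `det (D A D) = det A / ∏ A i i`
is at most `1`. This is Hadamard's inequality `det A ≤ ∏ A i i` for positive definite `A`, which we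
apply to `A = 1 + M`.
-/

open Matrix
open scoped ComplexOrder

theorem Real.prod_le_one_of_sum_le_card {ι : Type*} [Fintype ι] {μ : ι → ℝ}
    (h0 : ∀ i, 0 ≤ μ i) (hs : ∑ i, μ i ≤ Fintype.card ι) : ∏ i, μ i ≤ 1 :=
  calc ∏ i, μ i ≤ ∏ i, Real.exp (μ i - 1) :=
        Finset.prod_le_prod (fun i _ ↦ h0 i) fun i _ ↦ by linarith [Real.add_one_le_exp (μ i - 1)]
    _ = Real.exp (∑ i, μ i - Fintype.card ι) := by simp [← Real.exp_sum]
    _ ≤ 1 := Real.exp_le_one_iff.mpr (by linarith)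

namespace Matrix

variable {n 𝕜 : Type*} [Fintype n] [DecidableEq n] [RCLike 𝕜]

theorem PosSemidef.det_le_one_of_diag_eq_one_s3 {A : Matrix n n 𝕜} (hA : A.PosSemidef)
    (hdiag : ∀ i, A i i = 1) : A.det ≤ 1 := by
  have hsum : ∑ i, hA.isHermitian.eigenvalues i = Fintype.card n := by
    have htrace := hA.isHermitian.trace_eq_sum_eigenvalues
    simp only [trace, diag_apply, hdiag, Finset.sum_const, Finset.card_univ, nsmul_one] at htrace
    exact_mod_cast htrace.symm
  rw [hA.isHermitian.det_eq_prod_eigenvalues, ← RCLike.ofReal_prod, ← RCLike.ofReal_one,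
    RCLike.ofReal_le_ofReal]
  exact Real.prod_le_one_of_sum_le_card hA.eigenvalues_nonneg hsum.le

theorem PosDef.det_le_prod_diag_s3 {A : Matrix n n 𝕜} (hA : A.PosDef) : A.det ≤ ∏ i, A i i := by
  set s : n → ℝ := fun i ↦ √(RCLike.re (A i i))
  have hAii : ∀ i, A i i = ((s i ^ 2 : ℝ) : 𝕜) := fun i ↦ by
    rw [Real.sq_sqrt (RCLike.pos_iff.mp hA.diag_pos).1.le, hA.isHermitian.coe_re_apply_self]
  set d : n → 𝕜 := fun i ↦ ((s i)⁻¹ : ℝ)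
  have hscale : ∀ i, d i * A i i * d i = 1 := fun i ↦ by
    have hs : s i ≠ 0 := fun h ↦ by simpa [hAii i, h] using (hA.diag_pos (i := i)).ne'
    simp only [d, hAii, ← RCLike.ofReal_mul, ← RCLike.ofReal_one (K := 𝕜)]
    field_simp
  have hB : (diagonal d * A * diagonal d).PosSemidef := by
    simpa [d, diagonal_conjTranspose, Pi.star_def] using
      hA.posSemidef.conjTranspose_mul_mul_same (diagonal d)
  have hdet : A.det = (∏ i, A i i) * (diagonal d * A * diagonal d).det := by
    rw [det_mul, det_mul, det_diagonal]
    calc A.det = (∏ i, (d i * A i i * d i)) * A.det := by simp [hscale]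
      _ = _ := by simp only [Finset.prod_mul_distrib]; ring
  rw [hdet]
  refine mul_le_of_le_one_right (Finset.prod_nonneg fun i _ ↦ hA.diag_pos.le)
    (hB.det_le_one_of_diag_eq_one_s3 fun i ↦ ?_)
  simpa [mul_diagonal, diagonal_mul, mul_comm] using hscale i

end Matrix

/-- Hadamard-type inequality: for a Hermitian positive semidefinite complex matrix `M`,
`det (I + M)` is real, the diagonal entries `M_{ii}` are real and nonnegative, and
`det (I + M) ≤ ∏ i (1 + M_{ii})`. -/
theorem det_one_add_posSemidef_le_prod_one_add_diag (N : ℕ)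
    (M : Matrix (Fin N) (Fin N) ℂ) (hM : M.PosSemidef) :
    ((1 + M).det).im = 0 ∧
    (∀ i : Fin N, (M i i).im = 0 ∧ 0 ≤ (M i i).re) ∧
    ((1 + M).det).re ≤ ∏ i : Fin N, (1 + (M i i).re) := by
  have hdiag : ∀ i : Fin N, (M i i).im = 0 ∧ 0 ≤ (M i i).re := fun i ↦ by
    have := Complex.le_def.mp (hM.diag_nonneg (i := i))
    exact ⟨this.2.symm, this.1⟩
  have hprod : ∏ i, (1 + M) i i = ((∏ i, (1 + (M i i).re) : ℝ) : ℂ) := by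
    push_cast
    refine Finset.prod_congr rfl fun i _ ↦ ?_
    rw [Matrix.add_apply, one_apply_eq, ← hM.isHermitian.coe_re_apply_self]
    rfl
  have hhadamard := (PosDef.one.add_posSemidef hM).det_le_prod_diag_s3
  rw [hprod, Complex.le_def, Complex.ofReal_re, Complex.ofReal_im] at hhadamard
  exact ⟨hhadamard.2, hdiag, hhadamard.1⟩
end

section
/- Let N ∈ ℕ, let c ≥ 0 be real, let H be an N × N complex matrix, and let Q be an N × N Hermitian positive semidefinite complex matrix whose trace satisfies trace(Q) ≤ c. Then det(I + H Q Hᴴ) and det(I + c · H Hᴴ) are real numbers and det(I + H Q Hᴴ) ≤ det(I + c · H Hᴴ). -/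
/-!
Since `Q ⪰ 0`, each eigenvalue of `Q` is at most `trace Q ≤ c`, so `Q ≤ c • 1` in the Loewner
order, and conjugating by `H` gives `1 + H Q Hᴴ ≤ 1 + c • H Hᴴ`. The determinant is monotone on
positive semidefinite matrices: for `A ≻ 0` with square root `S`, `det B = det A · det (S⁻¹ B S⁻¹)`
and `S⁻¹ B S⁻¹ ≥ 1` has all eigenvalues `≥ 1`. Both determinants are real because in the complex
order `0 < det A ≤ det B` forces `det A` and `det B` to have imaginary part `0`.
-/

open Matrix
open scoped ComplexOrder MatrixOrder

namespace Matrix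

variable {n 𝕜 : Type*} [Fintype n] [DecidableEq n] [RCLike 𝕜] {A B : Matrix n n 𝕜}

lemma PosSemidef.le_smul_one_of_re_trace_le (hA : A.PosSemidef) {c : ℝ}
    (hc : RCLike.re A.trace ≤ c) : A ≤ c • (1 : Matrix n n 𝕜) := by
  rw [← Algebra.algebraMap_eq_smul_one, le_algebraMap_iff_spectrum_le,
    hA.isHermitian.spectrum_real_eq_range_eigenvalues]
  rintro _ ⟨i, rfl⟩
  have htrace : RCLike.re A.trace = ∑ j, hA.isHermitian.eigenvalues j := by
    simp [hA.isHermitian.trace_eq_sum_eigenvalues]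
  calc hA.isHermitian.eigenvalues i ≤ ∑ j, hA.isHermitian.eigenvalues j :=
        Finset.single_le_sum (fun j _ ↦ hA.eigenvalues_nonneg j) (Finset.mem_univ i)
    _ ≤ c := htrace ▸ hc

lemma one_le_det_of_one_le (h : 1 ≤ A) : 1 ≤ A.det := by
  have hA : A.IsHermitian := (nonneg_iff_posSemidef.mp (zero_le_one.trans h)).isHermitian
  have hev : ∀ i, 1 ≤ hA.eigenvalues i := fun i ↦
    (algebraMap_le_iff_le_spectrum (r := 1) (a := A)).mp (by simpa using h) _
      (hA.eigenvalues_mem_spectrum_real i)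
  rw [hA.det_eq_prod_eigenvalues, ← RCLike.ofReal_prod]
  exact_mod_cast Finset.one_le_prod fun i _ ↦ hev i

lemma PosDef.det_le_det_of_le (hA : A.PosDef) (hAB : A ≤ B) : A.det ≤ B.det := by
  obtain ⟨S, hS, rfl⟩ : ∃ S, 0 ≤ S ∧ S * S = A :=
    ⟨CFC.sqrt A, CFC.sqrt_nonneg A, CFC.sqrt_mul_sqrt_self A hA.posSemidef.nonneg⟩
  have hSdet : IsUnit S.det := by
    refine isUnit_iff_ne_zero.mpr fun h ↦ hA.det_pos.ne' ?_
    rw [det_mul, h, zero_mul]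
  have hC : 1 ≤ S⁻¹ * B * S⁻¹ := by
    have := conjugate_le_conjugate_of_nonneg hAB (nonneg_iff_posSemidef.mp hS).inv.nonneg
    rwa [Matrix.mul_assoc, Matrix.mul_assoc, mul_nonsing_inv S hSdet, Matrix.mul_one,
      nonsing_inv_mul S hSdet] at this
  have hB : B = S * (S⁻¹ * B * S⁻¹) * S := by
    simp only [Matrix.mul_assoc, nonsing_inv_mul S hSdet, Matrix.mul_one]
    rw [← Matrix.mul_assoc, mul_nonsing_inv S hSdet, Matrix.one_mul]
  calc (S * S).det ≤ (S * S).det * (S⁻¹ * B * S⁻¹).det :=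
        le_mul_of_one_le_right hA.det_pos.le (one_le_det_of_one_le hC)
    _ = B.det := by
        conv_rhs => rw [hB, det_mul, det_mul, mul_right_comm, ← det_mul]

lemma PosSemidef.det_le_det_of_le (hA : A.PosSemidef) (hAB : A ≤ B) : A.det ≤ B.det := by
  by_cases h : A.det = 0
  · exact h ▸ (nonneg_iff_posSemidef.mp (hA.nonneg.trans hAB)).det_nonneg
  · exact (hA.posDef_iff_det_ne_zero.mpr h).det_le_det_of_le hAB

end Matrix

theorem det_one_add_conj_le_det_one_add_smul_general (N : ℕ) (c : ℝ)
    (H Q : Matrix (Fin N) (Fin N) ℂ) (hQ : Q.PosSemidef)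
    (htr : (Matrix.trace Q).re ≤ c) :
    ((1 + H * Q * Hᴴ).det).im = 0 ∧
    ((1 + (c : ℂ) • (H * Hᴴ)).det).im = 0 ∧
    ((1 + H * Q * Hᴴ).det).re ≤ ((1 + (c : ℂ) • (H * Hᴴ)).det).re := by
  have hHQH : (H * Q * Hᴴ).PosSemidef := hQ.mul_mul_conjTranspose_same H
  have hle : 1 + H * Q * Hᴴ ≤ 1 + (c : ℂ) • (H * Hᴴ) := by
    have := star_right_conjugate_le_conjugate (hQ.le_smul_one_of_re_trace_le htr) H
    rw [star_eq_conjTranspose, Matrix.mul_smul, Matrix.mul_one, Matrix.smul_mul,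
      ← Complex.coe_smul] at this
    exact add_le_add_right this 1
  obtain ⟨hre, him⟩ := Complex.le_def.mp ((PosSemidef.one.add hHQH).det_le_det_of_le hle)
  have hreal := (Complex.pos_iff.mp (PosDef.one.add_posSemidef hHQH).det_pos).2.symm
  exact ⟨hreal, him ▸ hreal, hre⟩

/-- For a complex `N × N` matrix `H` and a Hermitian positive semidefinite `Q` with
`trace Q ≤ c`, both `det (I + H Q Hᴴ)` and `det (I + c · H Hᴴ)` are real, and
`det (I + H Q Hᴴ) ≤ det (I + c · H Hᴴ)`. -/
theorem det_one_add_conj_le_det_one_add_smul (N : ℕ) (c : ℝ) (hc : 0 ≤ c)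
    (H Q : Matrix (Fin N) (Fin N) ℂ) (hQ : Q.PosSemidef)
    (htr : (Matrix.trace Q).re ≤ c) :
    ((1 + H * Q * Hᴴ).det).im = 0 ∧
    ((1 + (c : ℂ) • (H * Hᴴ)).det).im = 0 ∧
    ((1 + H * Q * Hᴴ).det).re ≤ ((1 + (c : ℂ) • (H * Hᴴ)).det).re :=
  det_one_add_conj_le_det_one_add_smul_general N c H Q hQ htr
end

section
/- Fix real numbers α > 2, P > 0 and κ > 0, and let Ψ : ℕ → ℕ satisfy 1 ≤ Ψ(n) ≤ n^{α/2 − 2 − κ} for all n ≥ 2. Define, for n ≥ 2, C_s(n) = ∑_{i=1}^{⌊ln(√n/2)⌋} (n / e^i) · ln(1 + P · 2^α · n^{2 − α/2} · Ψ(n) · e^{iα}). Then C_s(n) = O(n^{1/2 + 2/α} · Ψ(n)^{1/α} · ln n) as n → ∞, i.e., there exist a constant K > 0 and N₀ ∈ ℕ such that C_s(n) ≤ K · n^{1/2 + 2/α} · Ψ(n)^{1/α} · ln n for all n ≥ N₀. -/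
/-!
Since `log (1 + x) ≤ α x^{1/α}` for `x ≥ 0` and `α ≥ 1`, the `i`-th summand is at most
`(n / e^i) · α (P 2^α n^{2 - α/2} Ψ(n))^{1/α} e^i`, in which `e^i` cancels; and there are at most
`log n` summands.
-/

open Finset

namespace Real

lemma log_one_add_le_mul_rpow_inv {x p : ℝ} (hx : 0 ≤ x) (hp : 1 ≤ p) :
    log (1 + x) ≤ p * x ^ (1 / p) := by
  have hp0 : 0 < p := one_pos.trans_le hp
  set t := x ^ (1 / p)
  have ht : 0 ≤ t := rpow_nonneg hx _
  have htp : t ^ p = x := by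
    rw [← rpow_mul hx, one_div_mul_cancel hp0.ne', rpow_one]
  calc log (1 + x) ≤ log ((1 + t) ^ p) := by
        refine log_le_log (by positivity) ?_
        simpa [htp] using add_rpow_le_rpow_add zero_le_one ht hp
    _ = p * log (1 + t) := log_rpow (by positivity) p
    _ ≤ p * t := by
        gcongr
        simpa using log_le_sub_one_of_pos (show 0 < 1 + t by positivity)

end Real

open Real

lemma div_exp_mul_log_one_add_mul_exp_le {A α x : ℝ} (hA : 0 ≤ A) (hα : 1 ≤ α) (hx : 0 ≤ x)
    (t : ℝ) :
    x / exp t * log (1 + A * exp (t * α)) ≤ α * A ^ (1 / α) * x := by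
  have hα0 : α ≠ 0 := (one_pos.trans_le hα).ne'
  have hroot : (A * exp (t * α)) ^ (1 / α) = A ^ (1 / α) * exp t := by
    rw [mul_rpow hA (exp_pos _).le, ← exp_mul, mul_one_div, mul_div_cancel_right₀ t hα0]
  calc x / exp t * log (1 + A * exp (t * α))
      ≤ x / exp t * (α * (A ^ (1 / α) * exp t)) := by
        gcongr
        rw [← hroot]
        exact log_one_add_le_mul_rpow_inv (by positivity) hα
    _ = α * A ^ (1 / α) * x := by
        field_simp

lemma natFloor_log_sqrt_div_two_le_log (n : ℕ) : (⌊log (√n / 2)⌋₊ : ℝ) ≤ log n := by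
  rcases n.eq_zero_or_pos with rfl | hn
  · simp
  have hn1 : (1 : ℝ) ≤ n := by exact_mod_cast hn
  rcases le_total (log (√n / 2)) 0 with hneg | hpos
  · simpa [Nat.floor_of_nonpos hneg] using log_nonneg hn1
  have hsqrt : √(n : ℝ) ≤ n := sqrt_le_iff.mpr ⟨by positivity, by nlinarith⟩
  calc (⌊log (√n / 2)⌋₊ : ℝ) ≤ log (√n / 2) := Nat.floor_le hpos
    _ ≤ log n := log_le_log (by positivity) (by linarith [sqrt_nonneg (n : ℝ)])

lemma rpow_two_sub_div_two_rpow_inv_mul_self {x : ℝ} (hx : 0 < x) {α : ℝ} (hα : α ≠ 0) :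
    (x ^ (2 - α / 2)) ^ (1 / α) * x = x ^ ((1 : ℝ) / 2 + 2 / α) := by
  rw [← rpow_mul hx.le, ← rpow_add_one hx.ne']
  congr 1
  field_simp
  ring

theorem Cs_upper_bound_general (α P : ℝ) (hα : 2 < α) (hP : 0 < P)
    (Ψ : ℕ → ℕ) :
    ∃ K : ℝ, 0 < K ∧ ∃ N₀ : ℕ, ∀ n : ℕ, N₀ ≤ n →
      (∑ i ∈ Finset.Icc 1 ⌊Real.log (Real.sqrt n / 2)⌋₊,
        ((n : ℝ) / Real.exp i) *
          Real.log (1 + P * 2 ^ α * (n : ℝ) ^ (2 - α / 2) * (Ψ n : ℝ) * Real.exp (i * α)))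
        ≤ K * (n : ℝ) ^ ((1 : ℝ) / 2 + 2 / α) * (Ψ n : ℝ) ^ ((1 : ℝ) / α) * Real.log n := by
  refine ⟨α * (P * 2 ^ α) ^ (1 / α), by positivity, 1, fun n hn => ?_⟩
  have hn0 : (0 : ℝ) < n := by exact_mod_cast hn
  set M := ⌊log (√n / 2)⌋₊
  set A := P * 2 ^ α * (n : ℝ) ^ (2 - α / 2) * (Ψ n : ℝ)
  have hA : A ^ (1 / α) * n
      = (P * 2 ^ α) ^ (1 / α) * (n : ℝ) ^ ((1 : ℝ) / 2 + 2 / α) * (Ψ n : ℝ) ^ ((1 : ℝ) / α) := by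
    rw [← rpow_two_sub_div_two_rpow_inv_mul_self hn0 (by linarith : α ≠ 0),
      mul_rpow (by positivity) (by positivity), mul_rpow (by positivity) (by positivity)]
    ring
  calc ∑ i ∈ Icc 1 M, (n : ℝ) / exp i * log (1 + A * exp (i * α))
      ≤ ∑ _i ∈ Icc 1 M, α * A ^ (1 / α) * n :=
        sum_le_sum fun i _ ↦
          div_exp_mul_log_one_add_mul_exp_le (by positivity) (by linarith) hn0.le i
    _ = M * (α * A ^ (1 / α) * n) := by simp
    _ ≤ log n * (α * A ^ (1 / α) * n) := by
        gcongr
        exact natFloor_log_sqrt_div_two_le_log n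
    _ = _ := by
        rw [mul_assoc α, hA]
        ring

/-- Scaling of the summation `C_s(n)`: for `α > 2 (2 + log_n Ψ(n))` (expressed via
`Ψ(n) ≤ n^(α/2 - 2 - κ)` with `κ > 0`),
`C_s(n) = O(n^(1/2 + 2/α) Ψ(n)^(1/α) log n)`. -/
theorem Cs_upper_bound (α P κ : ℝ) (hα : 2 < α) (hP : 0 < P) (hκ : 0 < κ)
    (Ψ : ℕ → ℕ)
    (hΨ : ∀ n : ℕ, 2 ≤ n → 1 ≤ Ψ n ∧ (Ψ n : ℝ) ≤ (n : ℝ) ^ (α / 2 - 2 - κ)) :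
    ∃ K : ℝ, 0 < K ∧ ∃ N₀ : ℕ, ∀ n : ℕ, N₀ ≤ n →
      (∑ i ∈ Finset.Icc 1 ⌊Real.log (Real.sqrt n / 2)⌋₊,
        ((n : ℝ) / Real.exp i) *
          Real.log (1 + P * 2 ^ α * (n : ℝ) ^ (2 - α / 2) * (Ψ n : ℝ) * Real.exp (i * α)))
        ≤ K * (n : ℝ) ^ ((1 : ℝ) / 2 + 2 / α) * (Ψ n : ℝ) ^ ((1 : ℝ) / α) * Real.log n :=
  Cs_upper_bound_general α P hα hP Ψ
end

section
/- Fix real numbers α > 2, κ with 0 < κ < α/2, and b > 0. Define, for n ≥ 2, f₁(n) = ∑_{i=1}^{⌊(2κ/α) · ln(√n/2)⌋} (n / e^i) · ln(1 + b · e^{iα} / n^{κ}). Then f₁(n) = O(n^{1 − κ/α}) as n → ∞, i.e., there exist a constant K > 0 and N₀ ∈ ℕ such that f₁(n) ≤ K · n^{1 − κ/α} for all n ≥ N₀. -/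
/-!
Since `log (1 + x) ≤ x`, the `i`-th term is at most `b n^(1-κ) e^(i(α-1))`, so the sum is
dominated by a geometric series with ratio `e^(α-1) > 1`, hence by a constant times its last
term. The cut-off `i ≤ (2κ/α) log (√n/2)` makes that last term at most `n^(κ(α-1)/α)`, and
`n^(1-κ) · n^(κ(α-1)/α) = n^(1-κ/α)`.
-/

open Finset Real

lemma div_exp_mul_log_one_add_le {n b : ℝ} (hn : 0 < n) (hb : 0 ≤ b) (α κ : ℝ) (i : ℕ) :
    n / exp i * log (1 + b * exp (i * α) / n ^ κ) ≤ b * n ^ (1 - κ) * exp (α - 1) ^ i := by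
  have hx : 0 ≤ b * exp (i * α) / n ^ κ := by positivity
  calc n / exp i * log (1 + b * exp (i * α) / n ^ κ)
      ≤ n / exp i * (b * exp (i * α) / n ^ κ) := by
        gcongr
        linarith [log_le_sub_one_of_pos (by linarith : 0 < 1 + b * exp (i * α) / n ^ κ)]
    _ = b * n ^ (1 - κ) * exp (α - 1) ^ i := by
        rw [← exp_nat_mul, rpow_sub hn, rpow_one, show (i : ℝ) * (α - 1) = i * α - i by ring,
          exp_sub]
        field_simp

lemma geom_sum_Icc_one_le {r : ℝ} (hr : 1 < r) (M : ℕ) :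
    ∑ i ∈ Icc 1 M, r ^ i ≤ r ^ (M + 1) / (r - 1) := by
  rw [← Ico_add_one_right_eq_Icc, geom_sum_Ico hr.ne' (by omega)]
  gcongr
  linarith

lemma exp_pow_floor_mul_log_le {a c y : ℝ} (ha : 0 ≤ a) (hc : 0 ≤ c) (hy : 1 ≤ y) :
    exp c ^ ⌊a * log y⌋₊ ≤ y ^ (a * c) := by
  have hfloor : (⌊a * log y⌋₊ : ℝ) ≤ a * log y :=
    Nat.floor_le (mul_nonneg ha (log_nonneg hy))
  rw [← exp_nat_mul, rpow_def_of_pos (by linarith), exp_le_exp]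
  exact (mul_le_mul_of_nonneg_right hfloor hc).trans_eq (by ring)

lemma exp_pow_floor_mul_log_sqrt_div_two_le {a c x : ℝ} (ha : 0 ≤ a) (hc : 0 ≤ c) (hx : 4 ≤ x) :
    exp c ^ ⌊a * log (√x / 2)⌋₊ ≤ x ^ (a * c / 2) := by
  have hsqrt : 2 ≤ √x := by
    rw [show (2 : ℝ) = √4 by rw [show (4 : ℝ) = 2 ^ 2 by norm_num, sqrt_sq zero_le_two]]
    exact sqrt_le_sqrt hx
  calc exp c ^ ⌊a * log (√x / 2)⌋₊
      ≤ (√x / 2) ^ (a * c) := exp_pow_floor_mul_log_le ha hc (by linarith)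
    _ ≤ √x ^ (a * c) := by gcongr; linarith
    _ = x ^ (a * c / 2) := by
        rw [sqrt_eq_rpow, ← rpow_mul (by linarith)]
        ring_nf

theorem Cs1_upper_bound_general (α κ b : ℝ) (hα : 2 < α) (hκ : 0 < κ)
    (hb : 0 < b) :
    ∃ K : ℝ, 0 < K ∧ ∃ N₀ : ℕ, ∀ n : ℕ, N₀ ≤ n →
      (∑ i ∈ Finset.Icc 1 ⌊(2 * κ / α) * Real.log (Real.sqrt n / 2)⌋₊,
        ((n : ℝ) / Real.exp i) * Real.log (1 + b * Real.exp (i * α) / (n : ℝ) ^ κ))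
        ≤ K * (n : ℝ) ^ (1 - κ / α) := by
  set r := exp (α - 1)
  have hr : 1 < r := one_lt_exp_iff.mpr (by linarith)
  refine ⟨b * r / (r - 1), div_pos (by positivity) (by linarith), 4, fun n hn => ?_⟩
  have hn4 : (4 : ℝ) ≤ n := by exact_mod_cast hn
  have hn0 : (0 : ℝ) < n := by linarith
  set M := ⌊(2 * κ / α) * log (√n / 2)⌋₊
  have hM : r ^ M ≤ (n : ℝ) ^ (2 * κ / α * (α - 1) / 2) :=
    exp_pow_floor_mul_log_sqrt_div_two_le (by positivity) (by linarith) hn4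
  calc ∑ i ∈ Icc 1 M, (n : ℝ) / exp i * log (1 + b * exp (i * α) / (n : ℝ) ^ κ)
      ≤ ∑ i ∈ Icc 1 M, b * (n : ℝ) ^ (1 - κ) * r ^ i :=
        sum_le_sum fun i _ => div_exp_mul_log_one_add_le hn0 hb.le α κ i
    _ = b * (n : ℝ) ^ (1 - κ) * ∑ i ∈ Icc 1 M, r ^ i := by rw [mul_sum]
    _ ≤ b * (n : ℝ) ^ (1 - κ) * (r * r ^ M / (r - 1)) := by
        rw [← pow_succ']
        gcongr
        exact geom_sum_Icc_one_le hr M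
    _ ≤ b * (n : ℝ) ^ (1 - κ) * (r * (n : ℝ) ^ (2 * κ / α * (α - 1) / 2) / (r - 1)) := by
        gcongr
    _ = b * r / (r - 1) * (n : ℝ) ^ (1 - κ / α) := by
        rw [show ∀ p q : ℝ, b * p * (r * q / (r - 1)) = b * r / (r - 1) * (p * q) by
          intro p q; ring, ← rpow_add hn0]
        congr 2
        field_simp
        ring

/-- Scaling of the first partial summation `C_{s_1}`:
`∑_{i=1}^{⌊(2κ/α)ln(√n/2)⌋} (n/e^i) ln(1 + b e^{iα}/n^κ) = O(n^(1-κ/α))`. -/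
theorem Cs1_upper_bound (α κ b : ℝ) (hα : 2 < α) (hκ : 0 < κ) (hκα : κ < α / 2)
    (hb : 0 < b) :
    ∃ K : ℝ, 0 < K ∧ ∃ N₀ : ℕ, ∀ n : ℕ, N₀ ≤ n →
      (∑ i ∈ Finset.Icc 1 ⌊(2 * κ / α) * Real.log (Real.sqrt n / 2)⌋₊,
        ((n : ℝ) / Real.exp i) * Real.log (1 + b * Real.exp (i * α) / (n : ℝ) ^ κ))
        ≤ K * (n : ℝ) ^ (1 - κ / α) :=
  Cs1_upper_bound_general α κ b hα hκ hb
end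

section
/- Fix real numbers α > 2, κ with 0 < κ < α/2, and b > 0. Define, for n ≥ 2, f₂(n) = ∑_{i=⌊(2κ/α) · ln(√n/2)⌋ + 1}^{⌊ln(√n/2)⌋} (n / e^i) · ln(1 + b · e^{iα} / n^{κ}). Then f₂(n) = O(n^{1 − κ/α} · ln n) as n → ∞, i.e., there exist a constant K > 0 and N₀ ∈ ℕ such that f₂(n) ≤ K · n^{1 − κ/α} · ln n for all n ≥ N₀. -/
/-!
Every summation index satisfies `i ≤ ln(√n/2) ≤ (ln n)/2`, so `e^{iα} ≤ n^{α/2}` and each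
logarithmic factor is `O(ln n)`. What remains is a geometric tail
`∑_{i ≥ m} n e^{-i} = O(n e^{-m})`, and the lower summation index `m > (2κ/α) ln(√n/2)` gives
`e^{-m} ≤ 2^{2κ/α} n^{-κ/α}`.
-/

open Real Finset

lemma log_one_add_mul_le_log_one_add_add_log {b y : ℝ} (hb : 0 ≤ b) (hy : 1 ≤ y) :
    log (1 + b * y) ≤ log (1 + b) + log y := by
  rw [← log_mul (by linarith) (by linarith)]
  exact log_le_log (by positivity) (by nlinarith)

lemma log_one_add_mul_exp_div_rpow_le {x b α κ i : ℝ} (hx : exp 1 ≤ x) (hb : 0 ≤ b)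
    (hα : 0 ≤ α) (hκ : 0 ≤ κ) (hi₀ : 0 ≤ i) (hi : i ≤ log x / 2) :
    log (1 + b * exp (i * α) / x ^ κ) ≤ (log (1 + b) + α / 2) * log x := by
  have hx₁ : 1 ≤ x := (one_le_exp zero_le_one).trans hx
  have hlogx : 1 ≤ log x := (le_log_iff_exp_le (by linarith)).2 hx
  have hexp : 1 ≤ exp (i * α) := one_le_exp (by positivity)
  have hlogb : 0 ≤ log (1 + b) := log_nonneg (by linarith)
  calc log (1 + b * exp (i * α) / x ^ κ)
      ≤ log (1 + b * exp (i * α)) := by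
        gcongr
        exact div_le_self (by positivity) (one_le_rpow hx₁ hκ)
    _ ≤ log (1 + b) + i * α := by
        simpa only [log_exp] using log_one_add_mul_le_log_one_add_add_log hb hexp
    _ ≤ log (1 + b) * log x + α / 2 * log x := by
        nlinarith [mul_le_mul_of_nonneg_left hlogx hlogb]
    _ = (log (1 + b) + α / 2) * log x := by ring

lemma log_sqrt_div_two_le {x : ℝ} (hx : 0 < x) : log (√x / 2) ≤ log x / 2 := by
  rw [← log_sqrt hx.le]
  exact log_le_log (by positivity) (by linarith [sqrt_nonneg x])

lemma sum_Icc_exp_neg_le (m M : ℕ) :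
    ∑ i ∈ Icc m M, exp (-(i : ℝ)) ≤ exp (-(m : ℝ)) / (1 - exp (-1)) := by
  have hpow (k : ℕ) : exp (-(k : ℝ)) = exp (-1) ^ k := by
    rw [← exp_nat_mul]; ring_nf
  simp only [hpow, ← Ico_add_one_right_eq_Icc]
  exact geom_sum_Ico_le_of_lt_one (exp_pos _).le (exp_lt_one_iff.2 (by norm_num))

lemma exp_neg_mul_log_sqrt_div_two {x : ℝ} (hx : 0 < x) (c : ℝ) :
    exp (-(c * log (√x / 2))) = 2 ^ c * x ^ (-(c / 2)) := by
  rw [log_div (by positivity) two_ne_zero, log_sqrt hx.le, rpow_def_of_pos two_pos,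
    rpow_def_of_pos hx, ← exp_add]
  ring_nf

lemma sum_Icc_floor_div_exp_le {x : ℝ} (hx : 0 < x) (c : ℝ) (M : ℕ) :
    ∑ i ∈ Icc (⌊c * log (√x / 2)⌋₊ + 1) M, x / exp i
      ≤ 2 ^ c / (1 - exp (-1)) * x ^ (1 - c / 2) := by
  set m := ⌊c * log (√x / 2)⌋₊ + 1
  have hm : exp (-(m : ℝ)) ≤ 2 ^ c * x ^ (-(c / 2)) := by
    rw [← exp_neg_mul_log_sqrt_div_two hx]
    gcongr
    exact_mod_cast (Nat.lt_floor_add_one _).le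
  have hr : 0 < 1 - exp (-1 : ℝ) := sub_pos.2 (exp_lt_one_iff.2 (by norm_num))
  calc ∑ i ∈ Icc m M, x / exp i
      = x * ∑ i ∈ Icc m M, exp (-(i : ℝ)) := by
        simp only [mul_sum, exp_neg, div_eq_mul_inv]
    _ ≤ x * (2 ^ c * x ^ (-(c / 2)) / (1 - exp (-1))) := by
        gcongr
        exact (sum_Icc_exp_neg_le m M).trans (by gcongr)
    _ = 2 ^ c / (1 - exp (-1)) * (x * x ^ (-(c / 2))) := by ring
    _ = 2 ^ c / (1 - exp (-1)) * x ^ (1 - c / 2) := by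
        rw [show 1 - c / 2 = 1 + -(c / 2) by ring, rpow_add hx, rpow_one]

theorem Cs2_upper_bound_general (α κ b : ℝ) (hα : 2 < α) (hκ : 0 < κ)
    (hb : 0 < b) :
    ∃ K : ℝ, 0 < K ∧ ∃ N₀ : ℕ, ∀ n : ℕ, N₀ ≤ n →
      (∑ i ∈ Finset.Icc (⌊(2 * κ / α) * Real.log (Real.sqrt n / 2)⌋₊ + 1)
          ⌊Real.log (Real.sqrt n / 2)⌋₊,
        ((n : ℝ) / Real.exp i) * Real.log (1 + b * Real.exp (i * α) / (n : ℝ) ^ κ))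
        ≤ K * (n : ℝ) ^ (1 - κ / α) * Real.log n := by
  have hr : 0 < 1 - exp (-1 : ℝ) := sub_pos.2 (exp_lt_one_iff.2 (by norm_num))
  have hlogb : 0 < log (1 + b) := log_pos (by linarith)
  refine ⟨(log (1 + b) + α / 2) * (2 ^ (2 * κ / α) / (1 - exp (-1))), by positivity, 3,
    fun n hn => ?_⟩
  have hn₃ : (3 : ℝ) ≤ n := by exact_mod_cast hn
  have hterm : ∀ i ∈ Icc (⌊(2 * κ / α) * log (√n / 2)⌋₊ + 1) ⌊log (√n / 2)⌋₊,
      (n : ℝ) / exp i * log (1 + b * exp (i * α) / (n : ℝ) ^ κ)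
        ≤ (log (1 + b) + α / 2) * log n * ((n : ℝ) / exp i) := by
    intro i hi
    have hiL : (i : ℝ) ≤ log (√n / 2) :=
      (Nat.le_floor_iff' (by grind)).1 (mem_Icc.1 hi).2
    rw [mul_comm]
    gcongr
    exact log_one_add_mul_exp_div_rpow_le (by linarith [exp_one_lt_d9]) hb.le (by linarith)
      hκ.le (Nat.cast_nonneg i) (hiL.trans (log_sqrt_div_two_le (by linarith)))
  have htail := sum_Icc_floor_div_exp_le (by linarith : (0 : ℝ) < n) (2 * κ / α)
    ⌊log (√n / 2)⌋₊
  rw [show 2 * κ / α / 2 = κ / α by ring] at htail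
  refine (sum_le_sum hterm).trans ?_
  rw [← mul_sum]
  calc _ ≤ (log (1 + b) + α / 2) * log n
        * (2 ^ (2 * κ / α) / (1 - exp (-1)) * (n : ℝ) ^ (1 - κ / α)) := by
        gcongr
    _ = _ := by ring

/-- Scaling of the second partial summation `C_{s_2}`:
`∑_{i=⌊(2κ/α)ln(√n/2)⌋+1}^{⌊ln(√n/2)⌋} (n/e^i) ln(1 + b e^{iα}/n^κ) = O(n^(1-κ/α) ln n)`. -/
theorem Cs2_upper_bound (α κ b : ℝ) (hα : 2 < α) (hκ : 0 < κ) (hκα : κ < α / 2)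
    (hb : 0 < b) :
    ∃ K : ℝ, 0 < K ∧ ∃ N₀ : ℕ, ∀ n : ℕ, N₀ ≤ n →
      (∑ i ∈ Finset.Icc (⌊(2 * κ / α) * Real.log (Real.sqrt n / 2)⌋₊ + 1)
          ⌊Real.log (Real.sqrt n / 2)⌋₊,
        ((n : ℝ) / Real.exp i) * Real.log (1 + b * Real.exp (i * α) / (n : ℝ) ^ κ))
        ≤ K * (n : ℝ) ^ (1 - κ / α) * Real.log n :=
  Cs2_upper_bound_general α κ b hα hκ hb
end

section
/- Fix real numbers α > 2, P > 0 and κ > 0, and let Ψ : ℕ → ℕ satisfy 1 ≤ Ψ(n) ≤ n^{α/2 − 2 − κ} for all n ≥ 2. Define, for n ≥ 2, C_s(n) = ∑_{i=1}^{⌊ln(√n/2)⌋} (n / e^i) · ln(1 + P · 2^α · n^{2 − α/2} · Ψ(n) · e^{iα}) and B(n) = (e − 1) · Ψ(n) · C_s(n) + (2(e − 1)/e) · Ψ(n) · √n · ln(1 + P · n² · Ψ(n)). Then B(n) = O(n^{1/2 + 2/α} · Ψ(n)^{1 + 1/α} · ln n) as n → ∞, i.e., there exist a constant K > 0 and N₀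 ∈ ℕ such that B(n) ≤ K · n^{1/2 + 2/α} · Ψ(n)^{1 + 1/α} · ln n for all n ≥ N₀. -/
/-!
For `α ≥ 1` and `y ≥ 0` one has `log (1 + y) ≤ α y^(1/α)`: apply `log z ≤ z - 1` to
`z = (1 + y)^(1/α)` and use subadditivity of `t ↦ t^(1/α)`. In the `i`-th summand of `C_s(n)`
the argument is `y = c e^(iα)`, so `y^(1/α) = c^(1/α) e^i` and the factor `e^i` cancels against
`n / e^i`: every summand is at most `2α (PΨ)^(1/α) n^(1/2 + 2/α)`, uniformly in `i`, and there
are at most `ln n / 2` of them. The same inequality bounds `Ψ √n ln(1 + P n² Ψ)` by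
`α P^(1/α) Ψ^(1 + 1/α) n^(1/2 + 2/α)`, and `ln n ≥ 1` supplies the missing logarithm.
-/

open Finset Real

lemma Real.log_one_add_le_mul_rpow_inv_s8 {a x : ℝ} (ha : 1 ≤ a) (hx : 0 ≤ x) :
    log (1 + x) ≤ a * x ^ a⁻¹ := by
  have ha0 : 0 < a := by linarith
  have h1x : 0 < 1 + x := by linarith
  have hsub : (1 + x) ^ a⁻¹ ≤ 1 + x ^ a⁻¹ := by
    simpa using rpow_add_le_add_rpow zero_le_one hx (inv_nonneg.2 ha0.le)
      (inv_le_one_of_one_le₀ ha)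
  have hlog := log_le_sub_one_of_pos (rpow_pos_of_pos h1x a⁻¹)
  rw [log_rpow h1x] at hlog
  calc log (1 + x) = a * (a⁻¹ * log (1 + x)) := by field_simp
    _ ≤ a * x ^ a⁻¹ := by gcongr; linarith

lemma Real.div_exp_mul_log_one_add_mul_exp_le {a c m : ℝ} (ha : 1 ≤ a) (hc : 0 ≤ c)
    (hm : 0 ≤ m) (t : ℝ) :
    m / exp t * log (1 + c * exp (t * a)) ≤ a * (m * c ^ a⁻¹) := by
  have hpow : (c * exp (t * a)) ^ a⁻¹ = c ^ a⁻¹ * exp t := by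
    rw [mul_rpow hc (exp_pos _).le, ← exp_mul, mul_inv_cancel_right₀ (by linarith)]
  calc m / exp t * log (1 + c * exp (t * a)) ≤ m / exp t * (a * (c ^ a⁻¹ * exp t)) := by
        gcongr
        rw [← hpow]
        exact log_one_add_le_mul_rpow_inv_s8 ha (by positivity)
    _ = a * (m * c ^ a⁻¹) := by field_simp

lemma Real.sum_Icc_div_exp_mul_log_one_add_mul_exp_le {a c m : ℝ} (ha : 1 ≤ a) (hc : 0 ≤ c)
    (hm : 0 ≤ m) (M : ℕ) :
    ∑ i ∈ Icc 1 M, m / exp i * log (1 + c * exp (i * a)) ≤ M * (a * (m * c ^ a⁻¹)) := by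
  simpa using sum_le_card_nsmul (Icc 1 M) _ _ fun i _ ↦
    div_exp_mul_log_one_add_mul_exp_le ha hc hm i

lemma Real.natFloor_log_sqrt_div_two_le {x : ℝ} (hx : 1 ≤ x) :
    (⌊log (√x / 2)⌋₊ : ℝ) ≤ log x / 2 := by
  have hlog : log (√x / 2) ≤ log x / 2 := by
    rw [← log_sqrt (by linarith)]
    exact log_le_log (div_pos (sqrt_pos.2 (by linarith)) two_pos)
      (by linarith [sqrt_nonneg x])
  exact (Nat.cast_le.2 (Nat.floor_le_floor hlog)).trans
    (Nat.floor_le (by linarith [log_nonneg hx]))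

section CutSet

variable {α P ψ x : ℝ}

lemma cutset_rpow_inv_mul (hα : 0 < α) (hP : 0 ≤ P) (hψ : 0 ≤ ψ) (hx : 0 < x) :
    x * (P * 2 ^ α * x ^ (2 - α / 2) * ψ) ^ α⁻¹
      = 2 * (P ^ (1 / α) * x ^ (1 / 2 + 2 / α) * ψ ^ (1 / α)) := by
  have hexp : 1 + (2 - α / 2) * α⁻¹ = 1 / 2 + 2 / α := by field_simp; ring
  rw [mul_rpow (by positivity) hψ, mul_rpow (by positivity) (by positivity),
    mul_rpow hP (by positivity), rpow_rpow_inv zero_le_two hα.ne', ← rpow_mul hx.le,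
    ← hexp, rpow_add hx, rpow_one, one_div]
  ring

lemma cutset_boundary_rpow_inv_mul (hα : 0 < α) (hP : 0 ≤ P) (hψ : 0 ≤ ψ) (hx : 0 ≤ x) :
    √x * (P * x ^ 2 * ψ) ^ α⁻¹ = P ^ (1 / α) * x ^ (1 / 2 + 2 / α) * ψ ^ (1 / α) := by
  rw [mul_rpow (by positivity) hψ, mul_rpow hP (by positivity), ← rpow_natCast,
    ← rpow_mul hx, sqrt_eq_rpow, rpow_add' hx (by positivity), one_div]
  push_cast
  ring

lemma cutset_sum_le (hα : 1 ≤ α) (hP : 0 ≤ P) (hψ : 0 ≤ ψ) (hx : 1 ≤ x) :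
    ψ * ∑ i ∈ Icc 1 ⌊log (√x / 2)⌋₊,
        x / exp i * log (1 + P * 2 ^ α * x ^ (2 - α / 2) * ψ * exp (i * α))
      ≤ α * P ^ (1 / α) * x ^ (1 / 2 + 2 / α) * ψ ^ (1 + 1 / α) * log x := by
  have hα0 : 0 < α := by linarith
  have hc : 0 ≤ P * 2 ^ α * x ^ (2 - α / 2) * ψ := by positivity
  have hsum := sum_Icc_div_exp_mul_log_one_add_mul_exp_le hα hc (zero_le_one.trans hx)
    ⌊log (√x / 2)⌋₊
  rw [cutset_rpow_inv_mul hα0 hP hψ (by linarith)] at hsum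
  calc _ ≤ ψ * (log x / 2 *
          (α * (2 * (P ^ (1 / α) * x ^ (1 / 2 + 2 / α) * ψ ^ (1 / α))))) := by
        gcongr
        exact hsum.trans (by gcongr; exact natFloor_log_sqrt_div_two_le hx)
    _ = _ := by rw [rpow_one_add' hψ (by positivity)]; ring

lemma cutset_boundary_le (hα : 1 ≤ α) (hP : 0 ≤ P) (hψ : 0 ≤ ψ) (hx : 0 ≤ x) :
    ψ * (√x * log (1 + P * x ^ 2 * ψ))
      ≤ α * P ^ (1 / α) * x ^ (1 / 2 + 2 / α) * ψ ^ (1 + 1 / α) := by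
  have hα0 : 0 < α := by linarith
  calc _ ≤ ψ * (√x * (α * (P * x ^ 2 * ψ) ^ α⁻¹)) := by
        gcongr
        exact log_one_add_le_mul_rpow_inv_s8 hα (by positivity)
    _ = _ := by
        rw [mul_left_comm √x, cutset_boundary_rpow_inv_mul hα0 hP hψ hx,
          rpow_one_add' hψ (by positivity)]
        ring

end CutSet

theorem cutset_bound_scaling_general (α P : ℝ) (hα : 2 < α) (hP : 0 < P)
    (Ψ : ℕ → ℕ) :
    ∃ K : ℝ, 0 < K ∧ ∃ N₀ : ℕ, ∀ n : ℕ, N₀ ≤ n →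
      (Real.exp 1 - 1) * (Ψ n : ℝ) *
          (∑ i ∈ Finset.Icc 1 ⌊Real.log (Real.sqrt n / 2)⌋₊,
            ((n : ℝ) / Real.exp i) *
              Real.log (1 + P * 2 ^ α * (n : ℝ) ^ (2 - α / 2) * (Ψ n : ℝ) * Real.exp (i * α)))
        + (2 * (Real.exp 1 - 1) / Real.exp 1) * (Ψ n : ℝ) * Real.sqrt n *
            Real.log (1 + P * (n : ℝ) ^ 2 * (Ψ n : ℝ))
      ≤ K * (n : ℝ) ^ ((1 : ℝ) / 2 + 2 / α) * (Ψ n : ℝ) ^ (1 + (1 : ℝ) / α) * Real.log n := by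
  have he : 0 < exp 1 - 1 := by linarith [exp_one_gt_d9]
  refine ⟨(exp 1 - 1) * (1 + 2 / exp 1) * (α * P ^ (1 / α)), by positivity, 3,
    fun n hn ↦ ?_⟩
  have hn1 : (1 : ℝ) ≤ n := by norm_cast; omega
  have hlog : 1 ≤ log n := by
    rw [le_log_iff_exp_le (by positivity)]
    linarith [exp_one_lt_d9, (show (3 : ℝ) ≤ n by exact_mod_cast hn)]
  have hα1 : 1 ≤ α := by linarith
  have hsum := cutset_sum_le hα1 hP.le (Nat.cast_nonneg (Ψ n)) hn1
  have hbdry := cutset_boundary_le hα1 hP.le (Nat.cast_nonneg (Ψ n)) (Nat.cast_nonneg n)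
  set A := α * P ^ (1 / α) * (n : ℝ) ^ ((1 : ℝ) / 2 + 2 / α) *
    (Ψ n : ℝ) ^ (1 + (1 : ℝ) / α)
  linear_combination (exp 1 - 1) * hsum + (2 * (exp 1 - 1) / exp 1) * hbdry
    + (2 * (exp 1 - 1) / exp 1 * A) * hlog

/-- Scaling of the full cut-set upper bound
`B(n) = (e-1) Ψ(n) C_s(n) + (2(e-1)/e) Ψ(n) √n ln(1 + P n² Ψ(n))`:
`B(n) = O(n^(1/2 + 2/α) Ψ(n)^(1 + 1/α) ln n)`. -/
theorem cutset_bound_scaling (α P κ : ℝ) (hα : 2 < α) (hP : 0 < P) (hκ : 0 < κ)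
    (Ψ : ℕ → ℕ)
    (hΨ : ∀ n : ℕ, 2 ≤ n → 1 ≤ Ψ n ∧ (Ψ n : ℝ) ≤ (n : ℝ) ^ (α / 2 - 2 - κ)) :
    ∃ K : ℝ, 0 < K ∧ ∃ N₀ : ℕ, ∀ n : ℕ, N₀ ≤ n →
      (Real.exp 1 - 1) * (Ψ n : ℝ) *
          (∑ i ∈ Finset.Icc 1 ⌊Real.log (Real.sqrt n / 2)⌋₊,
            ((n : ℝ) / Real.exp i) *
              Real.log (1 + P * 2 ^ α * (n : ℝ) ^ (2 - α / 2) * (Ψ n : ℝ) * Real.exp (i * α)))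
        + (2 * (Real.exp 1 - 1) / Real.exp 1) * (Ψ n : ℝ) * Real.sqrt n *
            Real.log (1 + P * (n : ℝ) ^ 2 * (Ψ n : ℝ))
      ≤ K * (n : ℝ) ^ ((1 : ℝ) / 2 + 2 / α) * (Ψ n : ℝ) ^ (1 + (1 : ℝ) / α) * Real.log n :=
  cutset_bound_scaling_general α P hα hP Ψ
end

section
/- Let s > 0 and let X_s, Y_s, X_d, Y_d be independent random variables, each uniformly distributed on the interval [0, s]. Let D = √((X_s − X_d)² + (Y_s − Y_d)²) be the Euclidean distance between the points (X_s, Y_s) and (X_d, Y_d). Then for every z ≥ 0, ℙ(D ≤ z) ≤ 2z/s. -/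
/-! If `D ≤ z` then `|X_s - X_d| ≤ z`. Conditionally on `X_s`, the independent uniform `X_d`
has to fall in an interval of length `2z`, which has probability at most `2z/s`. -/

open MeasureTheory ProbabilityTheory Metric

lemma measure_dist_le_le_of_indepFun {Ω : Type*} [MeasurableSpace Ω] {P : Measure Ω}
    [IsProbabilityMeasure P] {X Y : Ω → ℝ} (hX : Measurable X) (hY : Measurable Y)
    (hXY : IndepFun X Y P) {c : ENNReal} (hY_law : P.map Y ≤ c • volume) (r : ℝ) :
    P {ω | dist (Y ω) (X ω) ≤ r} ≤ c * ENNReal.ofReal (2 * r) := by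
  have hS : MeasurableSet {p : ℝ × ℝ | dist p.2 p.1 ≤ r} :=
    measurableSet_le (by fun_prop) measurable_const
  have hlaw : P.map (fun ω ↦ (X ω, Y ω)) = (P.map X).prod (P.map Y) :=
    (indepFun_iff_map_prod_eq_prod_map_map hX.aemeasurable hY.aemeasurable).mp hXY
  have : IsProbabilityMeasure (P.map X) := Measure.isProbabilityMeasure_map hX.aemeasurable
  calc P {ω | dist (Y ω) (X ω) ≤ r}
      = (P.map X).prod (P.map Y) {p | dist p.2 p.1 ≤ r} := by
        rw [← hlaw, Measure.map_apply (hX.prodMk hY) hS]; rfl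
    _ = ∫⁻ x, P.map Y (closedBall x r) ∂P.map X := Measure.prod_apply hS
    _ ≤ ∫⁻ _, c * ENNReal.ofReal (2 * r) ∂P.map X :=
        lintegral_mono fun x ↦ (hY_law _).trans_eq <| by
          rw [Measure.smul_apply, Real.volume_closedBall, smul_eq_mul]
    _ = c * ENNReal.ofReal (2 * r) := by rw [lintegral_const, measure_univ, mul_one]

theorem distance_cdf_upper_bound_general
    (Ω : Type) [MeasurableSpace Ω] (Pr : Measure Ω) [IsProbabilityMeasure Pr]
    (s : ℝ) (hs : 0 < s)
    (Xs Ys Xd Yd : Ω → ℝ)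
    (hXs : Measurable Xs)
    (hXd : Measurable Xd)
    (hindep : iIndepFun ![Xs, Ys, Xd, Yd] Pr)
    (hunifXd : Measure.map Xd Pr = (ENNReal.ofReal s)⁻¹ • volume.restrict (Set.Icc 0 s)) :
    ∀ z : ℝ, 0 ≤ z →
      Pr {ω | Real.sqrt ((Xs ω - Xd ω) ^ 2 + (Ys ω - Yd ω) ^ 2) ≤ z}
        ≤ ENNReal.ofReal (2 * z / s) := by
  intro z _
  have hXsXd : IndepFun Xs Xd Pr := by
    simpa using hindep.indepFun (i := 0) (j := 2) (by decide)
  have hXd_law : Pr.map Xd ≤ (ENNReal.ofReal s)⁻¹ • volume := by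
    rw [hunifXd]
    gcongr
    exact Measure.restrict_le_self
  have hsub : {ω | Real.sqrt ((Xs ω - Xd ω) ^ 2 + (Ys ω - Yd ω) ^ 2) ≤ z}
      ⊆ {ω | dist (Xd ω) (Xs ω) ≤ z} := fun ω hω ↦ by
    rw [Set.mem_ofPred_eq, Real.dist_eq, abs_sub_comm]
    exact (Real.abs_le_sqrt (le_add_of_nonneg_right (sq_nonneg _))).trans hω
  calc Pr {ω | Real.sqrt ((Xs ω - Xd ω) ^ 2 + (Ys ω - Yd ω) ^ 2) ≤ z}
      ≤ Pr {ω | dist (Xd ω) (Xs ω) ≤ z} := measure_mono hsub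
    _ ≤ (ENNReal.ofReal s)⁻¹ * ENNReal.ofReal (2 * z) :=
        measure_dist_le_le_of_indepFun hXs hXd hXsXd hXd_law z
    _ = ENNReal.ofReal (2 * z / s) := by
        rw [ENNReal.ofReal_div_of_pos hs, ENNReal.div_eq_inv_mul]

/-- For four independent points coordinates, each uniform on `[0, s]`, the distance
`D` between `(X_s, Y_s)` and `(X_d, Y_d)` satisfies `ℙ(D ≤ z) ≤ 2z/s` for all `z ≥ 0`. -/
theorem distance_cdf_upper_bound
    (Ω : Type) [MeasurableSpace Ω] (Pr : Measure Ω) [IsProbabilityMeasure Pr]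
    (s : ℝ) (hs : 0 < s)
    (Xs Ys Xd Yd : Ω → ℝ)
    (hXs : Measurable Xs) (hYs : Measurable Ys)
    (hXd : Measurable Xd) (hYd : Measurable Yd)
    (hindep : iIndepFun ![Xs, Ys, Xd, Yd] Pr)
    (hunifXs : Measure.map Xs Pr = (ENNReal.ofReal s)⁻¹ • volume.restrict (Set.Icc 0 s))
    (hunifYs : Measure.map Ys Pr = (ENNReal.ofReal s)⁻¹ • volume.restrict (Set.Icc 0 s))
    (hunifXd : Measure.map Xd Pr = (ENNReal.ofReal s)⁻¹ • volume.restrict (Set.Icc 0 s))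
    (hunifYd : Measure.map Yd Pr = (ENNReal.ofReal s)⁻¹ • volume.restrict (Set.Icc 0 s)) :
    ∀ z : ℝ, 0 ≤ z →
      Pr {ω | Real.sqrt ((Xs ω - Xd ω) ^ 2 + (Ys ω - Yd ω) ^ 2) ≤ z}
        ≤ ENNReal.ofReal (2 * z / s) :=
  distance_cdf_upper_bound_general Ω Pr s hs Xs Ys Xd Yd hXs hXd hindep hunifXd
end

section
/- Let D be a real-valued random variable whose law is absolutely continuous with respect to Lebesgue measure (i.e., D has an integrable probability density function on ℝ). Then the fractional part of t·D converges in distribution to the uniform distribution on [0, 1] as t → ∞; precisely, for every x ∈ [0, 1], lim_{t → ∞} ℙ(fract(t·D) ≤ x) = x, where fract(y) = y − ⌊y⌋ and the limit is taken as the real parameter t tends to +∞. -/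
/-!
With `h(u) = 1{fract u ≤ x} - x`, which is `1`-periodic, bounded, and has mean zero over a period,
the claim says `∫ h(t y) g(y) dy → 0`, where `g` is the density of `D`. This is a
Riemann–Lebesgue lemma for periodic functions. For continuous compactly supported `φ`, the factor
`φ(⌈t y⌉ / t)` is constant on each period of `y ↦ h(t y)`, so `∫ h(t y) φ(⌈t y⌉ / t) dy = 0`. Hence
`|∫ h(t y) φ(y) dy| ≤ sup |h| · ∫ |φ(y) - φ(⌈t y⌉ / t)| dy`, and this tends to `0` by dominated
convergence. The general case follows by density of such `φ` in `L¹`.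
-/

open MeasureTheory Filter Set Function Metric Topology

variable {E : Type*} [NormedAddCommGroup E]

theorem dist_ceil_mul_div_le {t : ℝ} (ht : 0 < t) (y : ℝ) : dist (⌈t * y⌉ / t) y ≤ t⁻¹ := by
  have hlow : y ≤ ⌈t * y⌉ / t := by rw [le_div_iff₀ ht, mul_comm]; exact Int.le_ceil _
  have hup : ⌈t * y⌉ / t ≤ y + t⁻¹ := by
    rw [div_le_iff₀ ht, add_mul, inv_mul_cancel₀ ht.ne', mul_comm]
    exact (Int.ceil_lt_add_one _).le
  rw [Real.dist_eq, abs_le]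
  constructor <;> linarith

theorem tendsto_ceil_mul_div_atTop (y : ℝ) : Tendsto (fun t : ℝ => ⌈t * y⌉ / t) atTop (𝓝 y) := by
  rw [tendsto_iff_dist_tendsto_zero]
  refine squeeze_zero' (Eventually.of_forall fun _ => dist_nonneg) ?_ tendsto_inv_atTop_zero
  filter_upwards [eventually_gt_atTop 0] with t ht using dist_ceil_mul_div_le ht y

theorem HasCompactSupport.exists_integrable_bound_of_dist_le_one {φ : ℝ → E}
    (hφ : Continuous φ) (hφs : HasCompactSupport φ) :
    ∃ b : ℝ → ℝ, Integrable b ∧ ∀ y z, dist z y ≤ 1 → ‖φ z‖ ≤ b y := by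
  obtain ⟨R, -, hR⟩ := hφs.exists_pos_le_norm
  obtain ⟨M, hM⟩ := hφ.bounded_above_of_compact_support hφs
  refine ⟨(closedBall 0 (R + 1)).indicator fun _ => M,
    (integrableOn_const measure_closedBall_lt_top.ne).integrable_indicator measurableSet_closedBall,
    fun y z hz => ?_⟩
  by_cases hy : y ∈ closedBall 0 (R + 1)
  · rw [indicator_of_mem hy]
    exact hM z
  · rw [indicator_of_notMem hy, hR z ?_, norm_zero]
    rw [mem_closedBall_zero_iff, not_le] at hy
    linarith [norm_le_norm_add_norm_sub' y z, dist_eq_norm' z y]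

theorem HasCompactSupport.integrable_comp_ceil_mul_div {φ : ℝ → E} (hφ : Continuous φ)
    (hφs : HasCompactSupport φ) {t : ℝ} (ht : 1 ≤ t) : Integrable fun y => φ (⌈t * y⌉ / t) := by
  obtain ⟨b, hb, hφb⟩ := hφs.exists_integrable_bound_of_dist_le_one hφ
  refine hb.mono' (hφ.comp_aestronglyMeasurable
    (by fun_prop : Measurable fun y : ℝ => (⌈t * y⌉ : ℝ) / t).aestronglyMeasurable)
    (ae_of_all _ fun y => hφb y _ ?_)
  exact (dist_ceil_mul_div_le (by linarith) y).trans (inv_le_one_of_one_le₀ ht)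

theorem HasCompactSupport.tendsto_integral_norm_sub_comp_ceil_mul_div {φ : ℝ → E}
    (hφ : Continuous φ) (hφs : HasCompactSupport φ) :
    Tendsto (fun t : ℝ => ∫ y, ‖φ y - φ (⌈t * y⌉ / t)‖) atTop (𝓝 0) := by
  obtain ⟨b, hb, hφb⟩ := hφs.exists_integrable_bound_of_dist_le_one hφ
  have hbound : ∀ t ≥ (1 : ℝ), ∀ y, ‖‖φ y - φ (⌈t * y⌉ / t)‖‖ ≤ b y + b y := fun t ht y =>
    (norm_norm _).trans_le <| (norm_sub_le _ _).trans <| add_le_add (hφb y y (by simp))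
      (hφb y _ ((dist_ceil_mul_div_le (by linarith) y).trans (inv_le_one_of_one_le₀ ht)))
  have hmeas : ∀ t : ℝ, AEStronglyMeasurable fun y => ‖φ y - φ (⌈t * y⌉ / t)‖ := fun t =>
    (hφ.aestronglyMeasurable.sub (hφ.comp_aestronglyMeasurable
      (by fun_prop : Measurable fun y : ℝ => (⌈t * y⌉ : ℝ) / t).aestronglyMeasurable)).norm
  simpa using tendsto_integral_filter_of_dominated_convergence _ (Eventually.of_forall hmeas)
    ((eventually_ge_atTop 1).mono fun t ht => ae_of_all _ (hbound t ht)) (hb.add hb)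
    (ae_of_all _ fun y => (((hφ.tendsto y).comp (tendsto_ceil_mul_div_atTop y)).const_sub (φ y)).norm)

section PeriodicRiemannLebesgue

variable [NormedSpace ℝ E] {h : ℝ → ℝ} {C : ℝ}

theorem norm_integral_comp_mul_smul_le (hC : ∀ u, |h u| ≤ C) (t : ℝ) {g : ℝ → E}
    (hg : Integrable g) : ‖∫ y, h (t * y) • g y‖ ≤ C * ∫ y, ‖g y‖ := by
  rw [← integral_const_mul]
  refine norm_integral_le_of_norm_le (hg.norm.const_mul C) (ae_of_all _ fun y => ?_)
  rw [norm_smul, Real.norm_eq_abs]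
  exact mul_le_mul_of_nonneg_right (hC _) (norm_nonneg _)

theorem MeasureTheory.Integrable.bdd_comp_mul_smul (hmeas : Measurable h) (hC : ∀ u, |h u| ≤ C)
    (t : ℝ) {g : ℝ → E} (hg : Integrable g) : Integrable fun y => h (t * y) • g y :=
  hg.bdd_smul C (hmeas.comp (measurable_const_mul t)).aestronglyMeasurable
    (ae_of_all _ fun _ => (Real.norm_eq_abs _).trans_le (hC _))

variable [CompleteSpace E]

theorem integral_comp_mul_smul_comp_ceil_eq_zero (hper : Periodic h 1)
    (hmean : ∫ u in 0..1, h u = 0) (t : ℝ) (c : ℤ → E) : ∫ y, h (t * y) • c ⌈t * y⌉ = 0 := by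
  rw [Measure.integral_comp_mul_left (fun u => h u • c ⌈u⌉), smul_eq_zero]
  right
  by_cases hint : Integrable fun u => h u • c ⌈u⌉
  swap
  · exact integral_undef hint
  have hsum := (isAddFundamentalDomain_Ioc zero_lt_one 0).integral_eq_tsum'' _ hint
  refine hsum.trans ((tsum_congr fun ⟨_, n, rfl⟩ => ?_).trans tsum_zero)
  have hcell : EqOn (fun u => h (n • (1 : ℝ) + u) • c ⌈n • (1 : ℝ) + u⌉)
      (fun u => h u • c (n + 1)) (Ioc 0 (0 + 1)) := by
    intro u hu
    have hceil : ⌈u + n⌉ = n + 1 := by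
      rw [Int.ceil_eq_iff]
      push_cast
      constructor <;> linarith [hu.1, hu.2]
    have hshift : h (u + n) = h u := by simpa using hper.int_mul n u
    simp only [zsmul_eq_mul, mul_one, hceil, add_comm (n : ℝ) u, hshift]
  simp only [AddSubgroup.vadd_def, vadd_eq_add]
  rw [setIntegral_congr_fun measurableSet_Ioc hcell, integral_smul_const, zero_add,
    ← intervalIntegral.integral_of_le zero_le_one, hmean, zero_smul]

theorem tendsto_integral_comp_mul_smul_of_hasCompactSupport (hper : Periodic h 1)
    (hmean : ∫ u in 0..1, h u = 0) (hmeas : Measurable h) (hC : ∀ u, |h u| ≤ C) {φ : ℝ → E}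
    (hφ : Continuous φ) (hφs : HasCompactSupport φ) :
    Tendsto (fun t => ∫ y, h (t * y) • φ y) atTop (𝓝 0) := by
  have hφi : Integrable φ := hφ.integrable_of_hasCompactSupport hφs
  have hlim := (hφs.tendsto_integral_norm_sub_comp_ceil_mul_div hφ).const_mul C
  rw [mul_zero] at hlim
  refine squeeze_zero_norm' ?_ hlim
  filter_upwards [eventually_ge_atTop 1] with t ht
  have hgrid := hφs.integrable_comp_ceil_mul_div hφ ht
  have hsplit : ∫ y, h (t * y) • φ y = ∫ y, h (t * y) • (φ y - φ (⌈t * y⌉ / t)) := by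
    rw [← sub_zero (∫ y, h (t * y) • φ y),
      ← integral_comp_mul_smul_comp_ceil_eq_zero hper hmean t (fun k => φ (k / t)),
      ← integral_sub (hφi.bdd_comp_mul_smul hmeas hC t) (hgrid.bdd_comp_mul_smul hmeas hC t)]
    simp only [smul_sub]
  rw [hsplit]
  exact norm_integral_comp_mul_smul_le hC t (g := fun y => φ y - φ (⌈t * y⌉ / t)) (hφi.sub hgrid)

theorem tendsto_integral_comp_mul_smul (hper : Periodic h 1)
    (hmean : ∫ u in 0..1, h u = 0) (hmeas : Measurable h) (hC : ∀ u, |h u| ≤ C) {g : ℝ → E}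
    (hg : Integrable g) : Tendsto (fun t => ∫ y, h (t * y) • g y) atTop (𝓝 0) := by
  rw [Metric.tendsto_nhds]
  intro ε hε
  obtain ⟨δ, hδ, hCδ⟩ := exists_pos_mul_lt (half_pos hε) C
  obtain ⟨φ, hφs, hgφ, hφ, hφi⟩ := hg.exists_hasCompactSupport_integral_sub_le hδ
  filter_upwards [Metric.tendsto_nhds.1 (tendsto_integral_comp_mul_smul_of_hasCompactSupport
    hper hmean hmeas hC hφ hφs) _ (half_pos hε)] with t ht
  have hC0 : 0 ≤ C := (abs_nonneg _).trans (hC 0)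
  rw [dist_zero_right] at ht ⊢
  have happrox : ‖∫ y, h (t * y) • (g y - φ y)‖ ≤ C * δ :=
    (norm_integral_comp_mul_smul_le hC t (g := fun y => g y - φ y) (hg.sub hφi)).trans
      (by gcongr)
  calc ‖∫ y, h (t * y) • g y‖
      = ‖∫ y, (h (t * y) • (g y - φ y) + h (t * y) • φ y)‖ := by
        simp only [← smul_add, sub_add_cancel]
    _ = ‖(∫ y, h (t * y) • (g y - φ y)) + ∫ y, h (t * y) • φ y‖ := by
        rw [integral_add ((hg.sub hφi).bdd_comp_mul_smul hmeas hC t (g := fun y => g y - φ y))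
          (hφi.bdd_comp_mul_smul hmeas hC t)]
    _ ≤ ‖∫ y, h (t * y) • (g y - φ y)‖ + ‖∫ y, h (t * y) • φ y‖ := norm_add_le _ _
    _ < ε := by linarith

end PeriodicRiemannLebesgue

theorem integral_withDensity_ofReal_eq_integral_smul [NormedSpace ℝ E] {α : Type*}
    [MeasurableSpace α] {μ : Measure α} {f : α → ℝ} (hf : AEMeasurable f μ) (φ : α → E) :
    ∫ y, φ y ∂μ.withDensity (fun y => ENNReal.ofReal (f y)) = ∫ y, max (f y) 0 • φ y ∂μ := by
  rw [integral_withDensity_eq_integral_toReal_smul₀ hf.ennreal_ofReal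
    (ae_of_all _ fun _ => ENNReal.ofReal_lt_top)]
  simp only [ENNReal.toReal_ofReal']

noncomputable def fractDiscrepancy (x u : ℝ) : ℝ := (Iic x).indicator 1 (Int.fract u) - x

theorem periodic_fractDiscrepancy (x : ℝ) : Periodic (fractDiscrepancy x) 1 := fun u => by
  simp only [fractDiscrepancy, Int.fract_add_one]

theorem measurable_fractDiscrepancy (x : ℝ) : Measurable (fractDiscrepancy x) :=
  ((measurable_const.indicator measurableSet_Iic).comp measurable_fract).sub_const x

theorem abs_fractDiscrepancy_le_one {x : ℝ} (hx : x ∈ Icc (0 : ℝ) 1) (u : ℝ) :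
    |fractDiscrepancy x u| ≤ 1 := by
  rw [abs_le]
  by_cases hu : Int.fract u ∈ Iic x <;> simp [fractDiscrepancy, hu] <;> constructor <;>
    linarith [hx.1, hx.2]

theorem intervalIntegral_fractDiscrepancy_eq_zero {x : ℝ} (hx : x ∈ Icc (0 : ℝ) 1) :
    ∫ u in 0..1, fractDiscrepancy x u = 0 := by
  have hfract : ∫ u in Ioc (0 : ℝ) 1, (Iic x).indicator 1 (Int.fract u) = x := by
    rw [integral_Ioc_eq_integral_Ioo, setIntegral_congr_fun measurableSet_Ioo
      (fun u hu => by rw [Int.fract_eq_self.2 ⟨hu.1.le, hu.2⟩] : EqOn _ ((Iic x).indicator 1) _),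
      ← integral_Ioc_eq_integral_Ioo, integral_indicator_one measurableSet_Iic,
      measureReal_restrict_apply measurableSet_Iic, inter_comm, Ioc_inter_Iic, Real.volume_real_Ioc,
      inf_eq_right.2 hx.2]
    simp [hx.1]
  have hind : IntegrableOn (fun u => (Iic x).indicator (1 : ℝ → ℝ) (Int.fract u)) (Ioc 0 1) :=
    Measure.integrableOn_of_bounded (M := 1) (by simp)
      ((measurable_const.indicator measurableSet_Iic).comp measurable_fract).aestronglyMeasurable
      (ae_of_all _ fun u => by by_cases hu : Int.fract u ∈ Iic x <;> simp [hu])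
  rw [intervalIntegral.integral_of_le zero_le_one]
  simp only [fractDiscrepancy]
  rw [integral_sub hind (integrableOn_const (by simp)), hfract, setIntegral_const]
  simp

theorem measureReal_setOf_fract_mul_le (ν : Measure ℝ) [IsProbabilityMeasure ν] (t x : ℝ) :
    ν.real {y | Int.fract (t * y) ≤ x} = x + ∫ y, fractDiscrepancy x (t * y) ∂ν := by
  have hS : MeasurableSet {y : ℝ | Int.fract (t * y) ≤ x} :=
    measurableSet_le (measurable_fract.comp (measurable_const_mul t)) measurable_const
  have hSint : Integrable ({y : ℝ | Int.fract (t * y) ≤ x}.indicator (1 : ℝ → ℝ)) ν :=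
    (integrable_const 1).indicator hS
  have hind : ∀ y, (Iic x).indicator (1 : ℝ → ℝ) (Int.fract (t * y))
      = {y : ℝ | Int.fract (t * y) ≤ x}.indicator 1 y := fun _ => rfl
  simp only [fractDiscrepancy, hind]
  rw [integral_sub hSint (integrable_const x), integral_indicator_one hS, integral_const]
  simp

/-- Equidistribution of the fractional part: if the real random variable `D` has an
integrable density with respect to Lebesgue measure, then `fract (t·D)` converges in
distribution to the uniform distribution on `[0,1]` as `t → ∞`: for every `x ∈ [0,1]`,
`ℙ(fract(t·D) ≤ x) → x`. -/
theorem fract_tendsto_uniform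
    (Ω : Type) [MeasurableSpace Ω] (Pr : Measure Ω) [IsProbabilityMeasure Pr]
    (D : Ω → ℝ) (hD : Measurable D) (f : ℝ → ℝ)
    (hf_int : Integrable f)
    (hf : Measure.map D Pr = volume.withDensity (fun x => ENNReal.ofReal (f x))) :
    ∀ x ∈ Set.Icc (0 : ℝ) 1,
      Tendsto (fun t : ℝ => (Pr {ω | Int.fract (t * D ω) ≤ x}).toReal)
        atTop (nhds x) := by
  intro x hx
  have : IsProbabilityMeasure (Measure.map D Pr) := Measure.isProbabilityMeasure_map hD.aemeasurable
  have hlaw : ∀ t : ℝ, (Pr {ω | Int.fract (t * D ω) ≤ x}).toReal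
      = x + ∫ y, max (f y) 0 • fractDiscrepancy x (t * y) := fun t => by
    rw [← integral_withDensity_ofReal_eq_integral_smul hf_int.aemeasurable, ← hf,
      ← measureReal_setOf_fract_mul_le, measureReal_def,
      Measure.map_apply hD (measurableSet_le (by fun_prop) measurable_const)]
    rfl
  have hlim := tendsto_integral_comp_mul_smul (periodic_fractDiscrepancy x)
    (intervalIntegral_fractDiscrepancy_eq_zero hx) (measurable_fractDiscrepancy x)
    (abs_fractDiscrepancy_le_one hx) hf_int.pos_part
  simp only [smul_eq_mul, mul_comm (max _ _)] at hlim hlaw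
  simpa [hlaw] using hlim.const_add x
end

section
/- Let N ∈ ℕ, let M be an N × N Hermitian positive semidefinite complex matrix, let R and S be N × N Hermitian positive definite complex matrices, and let t ∈ [0, 1]. Then all the determinants below are positive real numbers and ln det(tR + (1−t)S + M) − ln det(tR + (1−t)S) ≤ t·(ln det(R + M) − ln det(R)) + (1−t)·(ln det(S + M) − ln det(S)); that is, the map R ↦ ln det(R + M) − ln det(R) is convex on the cone of Hermitian positive definite matrices. -/
/-!
Write the positive semidefinite `M` as a sum of rank-one matrices `v vᴴ`. The gap
`log det (A + M) - log det A` is additive along such a sum, each rank-one gap being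
`log (1 + vᴴ A'⁻¹ v)` at a translate `A'` of `A` (matrix determinant lemma); since translates of
convex functions are convex, it suffices that `A ↦ log (1 + vᴴ A⁻¹ v)` is convex.
For `C = a R + b S` and `x = C⁻¹ v`, Cauchy–Schwarz for the form `1 + yᴴ R z` gives
`(1 + vᴴ C⁻¹ v)² ≤ (1 + vᴴ R⁻¹ v) (1 + xᴴ R x)`, likewise for `S`, while
`a xᴴ R x + b xᴴ S x = xᴴ C x = vᴴ C⁻¹ v`; concavity of `log` then closes the argument.
-/

open Matrix
open scoped ComplexOrder

lemma log_one_add_le_of_sq_le_mul {w₁ w₂ a b q r s : ℝ} (hw₁ : 0 ≤ w₁) (hw₂ : 0 ≤ w₂)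
    (hw : w₁ + w₂ = 1) (ha : 0 ≤ a) (hb : 0 ≤ b) (hq : q = w₁ * a + w₂ * b)
    (hr : (1 + q) ^ 2 ≤ (1 + r) * (1 + a)) (hs : (1 + q) ^ 2 ≤ (1 + s) * (1 + b)) :
    Real.log (1 + q) ≤ w₁ * Real.log (1 + r) + w₂ * Real.log (1 + s) := by
  have hq0 : 0 < 1 + q := by nlinarith
  have log_le {c d : ℝ} (hd : 0 ≤ d) (h : (1 + q) ^ 2 ≤ (1 + c) * (1 + d)) :
      2 * Real.log (1 + q) ≤ Real.log (1 + c) + Real.log (1 + d) := by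
    have hc : 0 < 1 + c := pos_of_mul_pos_left ((pow_pos hq0 2).trans_le h) (by linarith)
    have := Real.log_le_log (pow_pos hq0 2) h
    rwa [Real.log_pow, Real.log_mul hc.ne' (by positivity)] at this
  have hconc : w₁ * Real.log (1 + a) + w₂ * Real.log (1 + b) ≤ Real.log (1 + q) := by
    have := strictConcaveOn_log_Ioi.concaveOn.2 (x := 1 + a) (y := 1 + b)
      (by simp only [Set.mem_Ioi]; linarith) (by simp only [Set.mem_Ioi]; linarith) hw₁ hw₂ hw
    rwa [smul_eq_mul, smul_eq_mul, smul_eq_mul, smul_eq_mul,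
      show w₁ * (1 + a) + w₂ * (1 + b) = 1 + q by rw [hq]; linear_combination hw] at this
  linear_combination mul_le_mul_of_nonneg_left (log_le ha hr) hw₁
    + mul_le_mul_of_nonneg_left (log_le hb hs) hw₂ + hconc - 2 * Real.log (1 + q) * hw

namespace Matrix

theorem det_add_vecMulVec {R m : Type*} [CommRing R] [Fintype m] [DecidableEq m]
    {A : Matrix m m R} (hA : IsUnit A.det) (u w : m → R) :
    (A + vecMulVec u w).det = A.det * (1 + w ⬝ᵥ A⁻¹ *ᵥ u) := by
  rw [vecMulVec_eq Unit, det_add_replicateCol_mul_replicateRow hA, Matrix.mul_assoc,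
    ← replicateCol_mulVec (ι := Unit)]
  congr 1
  simp [det_unique, replicateRow_mul_replicateCol_apply]

variable {𝕜 n : Type*} [RCLike 𝕜]

theorem convex_setOf_posDef : Convex ℝ {A : Matrix n n 𝕜 | A.PosDef} := by
  intro R hR S hS a b ha hb hab
  rcases ha.eq_or_lt with rfl | ha
  · simpa [(zero_add b).symm.trans hab] using hS
  · exact (PosDef.smul hR ha).add_posSemidef (PosSemidef.smul hS.posSemidef hb)

variable [Fintype n] [DecidableEq n]

lemma PosDef.re_two_mul_dotProduct_sub_le {A : Matrix n n 𝕜} (hA : A.PosDef) (x v : n → 𝕜) :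
    2 * RCLike.re (star x ⬝ᵥ v) - RCLike.re (star x ⬝ᵥ A *ᵥ x)
      ≤ RCLike.re (star v ⬝ᵥ A⁻¹ *ᵥ v) := by
  set y := A⁻¹ *ᵥ v
  have hAy : A *ᵥ y = v := by
    simp [y, mulVec_mulVec, mul_nonsing_inv _ hA.det_pos.ne'.isUnit]
  have hyv : star y ⬝ᵥ A *ᵥ x = star (star x ⬝ᵥ v) := by
    rw [dotProduct_mulVec, ← hA.isHermitian.eq, ← star_mulVec, hAy, star_dotProduct]
  have hnonneg := RCLike.nonneg_iff.mp (hA.posSemidef.dotProduct_mulVec_nonneg (x - y))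
  simp only [mulVec_sub, star_sub, dotProduct_sub, sub_dotProduct, hAy, hyv, map_sub] at hnonneg
  have hvy : RCLike.re (star y ⬝ᵥ v) = RCLike.re (star v ⬝ᵥ y) := by
    rw [star_dotProduct, RCLike.star_def, RCLike.conj_re]
  simp only [RCLike.star_def, RCLike.conj_re] at hnonneg
  linarith [hnonneg.1, hvy]

lemma PosDef.sq_one_add_re_dotProduct_le {A : Matrix n n 𝕜} (hA : A.PosDef) (x v : n → 𝕜) :
    (1 + RCLike.re (star x ⬝ᵥ v)) ^ 2
      ≤ (1 + RCLike.re (star v ⬝ᵥ A⁻¹ *ᵥ v)) * (1 + RCLike.re (star x ⬝ᵥ A *ᵥ x)) := by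
  set s := RCLike.re (star x ⬝ᵥ v)
  set a := RCLike.re (star x ⬝ᵥ A *ᵥ x)
  have ha : 0 ≤ a := (RCLike.nonneg_iff.mp (hA.posSemidef.dotProduct_mulVec_nonneg x)).1
  -- the optimal scaling of `x` in the previous bound
  set μ := (1 + s) / (1 + a)
  have h := hA.re_two_mul_dotProduct_sub_le (μ • x) v
  simp only [star_smul, star_trivial, mulVec_smul, smul_dotProduct, dotProduct_smul,
    RCLike.smul_re] at h
  have hμ : μ * (1 + a) = 1 + s := div_mul_cancel₀ _ (by positivity)
  nlinarith [mul_le_mul_of_nonneg_right h (by positivity : (0 : ℝ) ≤ 1 + a),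
    mul_nonneg (by positivity : (0 : ℝ) ≤ 1 + a) (sq_nonneg (1 - μ))]

theorem convexOn_log_one_add_re_dotProduct_inv_mulVec (v : n → 𝕜) :
    ConvexOn ℝ {A : Matrix n n 𝕜 | A.PosDef}
      (fun A => Real.log (1 + RCLike.re (star v ⬝ᵥ A⁻¹ *ᵥ v))) := by
  refine ⟨convex_setOf_posDef, fun R hR S hS a b ha hb hab => ?_⟩
  set C := a • R + b • S
  have hC : C.PosDef := convex_setOf_posDef hR hS ha hb hab
  set x := C⁻¹ *ᵥ v
  have hxv : star x ⬝ᵥ v = star v ⬝ᵥ C⁻¹ *ᵥ v := by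
    rw [star_mulVec, ← dotProduct_mulVec, hC.inv.isHermitian.eq]
  have hxCx : star x ⬝ᵥ C *ᵥ x = star v ⬝ᵥ C⁻¹ *ᵥ v := by
    rw [mulVec_mulVec, mul_nonsing_inv _ hC.det_pos.ne'.isUnit, one_mulVec, hxv]
  have hsplit : RCLike.re (star x ⬝ᵥ C *ᵥ x)
      = a * RCLike.re (star x ⬝ᵥ R *ᵥ x) + b * RCLike.re (star x ⬝ᵥ S *ᵥ x) := by
    simp only [C, add_mulVec, smul_mulVec, dotProduct_add, dotProduct_smul, map_add,
      RCLike.smul_re]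
  have quad_nonneg {A : Matrix n n 𝕜} (hA : A.PosDef) : 0 ≤ RCLike.re (star x ⬝ᵥ A *ᵥ x) :=
    (RCLike.nonneg_iff.mp (hA.posSemidef.dotProduct_mulVec_nonneg x)).1
  have hRx := hR.sq_one_add_re_dotProduct_le x v
  have hSx := hS.sq_one_add_re_dotProduct_le x v
  rw [hxv] at hRx hSx
  rw [hxCx] at hsplit
  exact log_one_add_le_of_sq_le_mul ha hb hab (quad_nonneg hR) (quad_nonneg hS) hsplit hRx hSx

noncomputable def logDetGap (A M : Matrix n n 𝕜) : ℝ :=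
  Real.log (RCLike.re (A + M).det) - Real.log (RCLike.re A.det)

theorem logDetGap_add (A M N : Matrix n n 𝕜) :
    logDetGap A (M + N) = logDetGap A M + logDetGap (A + M) N := by
  simp only [logDetGap, add_assoc]
  ring

theorem PosDef.logDetGap_vecMulVec {A : Matrix n n 𝕜} (hA : A.PosDef) (v : n → 𝕜) :
    logDetGap A (vecMulVec v (star v))
      = Real.log (1 + RCLike.re (star v ⬝ᵥ A⁻¹ *ᵥ v)) := by
  obtain ⟨hdet, hdet_im⟩ := RCLike.pos_iff.mp hA.det_pos
  obtain ⟨hq, -⟩ := RCLike.nonneg_iff.mp (hA.inv.posSemidef.dotProduct_mulVec_nonneg v)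
  rw [logDetGap, det_add_vecMulVec hA.det_pos.ne'.isUnit, RCLike.mul_re, hdet_im, zero_mul,
    sub_zero, map_add, RCLike.one_re, Real.log_mul hdet.ne' (by positivity), add_sub_cancel_left]

theorem convexOn_logDetGap_vecMulVec (v : n → 𝕜) :
    ConvexOn ℝ {A : Matrix n n 𝕜 | A.PosDef} (logDetGap · (vecMulVec v (star v))) :=
  (convexOn_log_one_add_re_dotProduct_inv_mulVec v).congr
    fun _ hA => (PosDef.logDetGap_vecMulVec hA v).symm

theorem convexOn_logDetGap_add {M N : Matrix n n 𝕜} (hM : M.PosSemidef)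
    (hMc : ConvexOn ℝ {A : Matrix n n 𝕜 | A.PosDef} (logDetGap · M))
    (hNc : ConvexOn ℝ {A : Matrix n n 𝕜 | A.PosDef} (logDetGap · N)) :
    ConvexOn ℝ {A : Matrix n n 𝕜 | A.PosDef} (logDetGap · (M + N)) := by
  have hshift : ConvexOn ℝ {A : Matrix n n 𝕜 | A.PosDef} (fun A => logDetGap (A + M) N) := by
    refine ((hNc.translate_right M).subset (s := {A : Matrix n n 𝕜 | A.PosDef})
      (fun A (hA : A.PosDef) => ?_) convex_setOf_posDef).congr fun A _ => ?_
    · simpa [add_comm] using hA.add_posSemidef hM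
    · simp [add_comm]
  exact (hMc.add hshift).congr fun A _ => (logDetGap_add A M N).symm

theorem PosSemidef.convexOn_logDetGap {M : Matrix n n 𝕜} (hM : M.PosSemidef) :
    ConvexOn ℝ {A : Matrix n n 𝕜 | A.PosDef} (logDetGap · M) := by
  obtain ⟨m, v, rfl⟩ := posSemidef_iff_eq_sum_vecMulVec.mp hM
  refine (Finset.sum_induction _
    (fun N => N.PosSemidef ∧ ConvexOn ℝ {A : Matrix n n 𝕜 | A.PosDef} (logDetGap · N))
    (fun M N hM hN => ⟨hM.1.add hN.1, convexOn_logDetGap_add hM.1 hM.2 hN.2⟩)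
    ⟨.zero, ?_⟩
    (fun i _ => ⟨posSemidef_vecMulVec_self_star (v i), convexOn_logDetGap_vecMulVec (v i)⟩)).2
  simpa [logDetGap] using convexOn_const (0 : ℝ) convex_setOf_posDef

end Matrix

/-- Convexity of `R ↦ ln det(R + M) - ln det R` on Hermitian positive definite
matrices: for `M` positive semidefinite, `R, S` positive definite and `t ∈ [0,1]`, all
the determinants are positive reals and
`ln det(tR+(1-t)S+M) - ln det(tR+(1-t)S) ≤ t (ln det(R+M) - ln det R) + (1-t)(ln det(S+M) - ln det S)`. -/
theorem logdet_diff_convex (N : ℕ) (M R S : Matrix (Fin N) (Fin N) ℂ)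
    (hM : M.PosSemidef) (hR : R.PosDef) (hS : S.PosDef)
    (t : ℝ) (ht : t ∈ Set.Icc (0 : ℝ) 1) :
    (0 < (R.det).re ∧ (R.det).im = 0) ∧
    (0 < (S.det).re ∧ (S.det).im = 0) ∧
    (0 < ((R + M).det).re ∧ ((R + M).det).im = 0) ∧
    (0 < ((S + M).det).re ∧ ((S + M).det).im = 0) ∧
    (0 < (((t : ℂ) • R + ((1 - t : ℝ) : ℂ) • S).det).re ∧
      (((t : ℂ) • R + ((1 - t : ℝ) : ℂ) • S).det).im = 0) ∧
    (0 < (((t : ℂ) • R + ((1 - t : ℝ) : ℂ) • S + M).det).re ∧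
      (((t : ℂ) • R + ((1 - t : ℝ) : ℂ) • S + M).det).im = 0) ∧
    Real.log (((t : ℂ) • R + ((1 - t : ℝ) : ℂ) • S + M).det).re
        - Real.log (((t : ℂ) • R + ((1 - t : ℝ) : ℂ) • S).det).re
      ≤ t * (Real.log ((R + M).det).re - Real.log (R.det).re)
        + (1 - t) * (Real.log ((S + M).det).re - Real.log (S.det).re) := by
  obtain ⟨ht0, ht1⟩ := ht
  have hconvex := hM.convexOn_logDetGap.2 hR hS ht0 (sub_nonneg.2 ht1) (add_sub_cancel t 1)
  have hC : (t • R + (1 - t) • S).PosDef :=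
    convex_setOf_posDef hR hS ht0 (sub_nonneg.2 ht1) (add_sub_cancel t 1)
  simp only [logDetGap, smul_eq_mul, RCLike.real_smul_eq_coe_smul (K := ℂ)] at hconvex hC
  have det_pos {A : Matrix (Fin N) (Fin N) ℂ} (hA : A.PosDef) : 0 < A.det.re ∧ A.det.im = 0 :=
    RCLike.pos_iff.mp hA.det_pos
  exact ⟨det_pos hR, det_pos hS, det_pos (hR.add_posSemidef hM), det_pos (hS.add_posSemidef hM),
    det_pos hC, det_pos (hC.add_posSemidef hM), hconvex⟩
end
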